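/- Let x(t), y(t), z(t), u(t) be curves satisfying ẋ = f(x, y, u), ẏ = h(x, y, u), ż = α(z, y, u) with α(z, y, u) = f(z + β(y), y, u) − Dβ(y)(h(z + β(y), y, u)). Define the invariants X(t) = A(γ(y(t)))x(t), Y(t) = ρ_{γ(y(t))}(y(t)), U(t) = ψ_{γ(y(t))}(u(t)) and the invariant error η(t) = A(γ(y(t)))z(t) + ℓ(Y(t)) − A(γ(y(t)))x(t). Then η is differentiable and satisfies the invariant error system η̇ = f(X + η, Y, U) − f(X, Y, U) − Dβ(Y)(h(X + η, Y, U) − h(X, Y, U)) + D_y[λ(·; η)](Y)(h(X, Y, U)), where λ(y; ξ) = A(γ(y))ξ and D_y[λ(·; η)](Y) denotes the Fréchet derivative of y ↦ A(γ(y))η at y = Y with η held fixed. -/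

import Mathlib

/-!
Writing `w = z + β(y) − x`, the error is `η = A(γ(y)) w` because `ℓ(Y) = A(γ(y)) β(y)`, so the
product rule gives `η̇ = D[A ∘ γ](y)(ẏ) w + A(γ(y)) ẇ`. Equivariance of `β` (and hence of `Dβ`),
of `f` and of `h` moves every term of `A(γ(y)) ẇ` to the invariant point `(X, Y, U)`; equivariance
of `y ↦ A(γ(y))` together with the chain rule along `ρ_{γ(y)}` does the same for the first term,
where `D_y[λ(·; η)](Y)(h(X, Y, U))` appears.
-/

theorem fderiv_apply_fderiv_eq_of_comp_eq {𝕜 : Type*} [NontriviallyNormedField 𝕜]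
    {E E' F F' : Type*} [NormedAddCommGroup E] [NormedSpace 𝕜 E]
    [NormedAddCommGroup E'] [NormedSpace 𝕜 E'] [NormedAddCommGroup F] [NormedSpace 𝕜 F]
    [NormedAddCommGroup F'] [NormedSpace 𝕜 F']
    {φ : E → E'} {F₁ : E' → F} {F₂ : E → F'} (L : F' ≃L[𝕜] F)
    (hcomp : ∀ y, F₁ (φ y) = L (F₂ y)) {y : E}
    (hF₁ : DifferentiableAt 𝕜 F₁ (φ y)) (hφ : DifferentiableAt 𝕜 φ y) (v : E) :
    fderiv 𝕜 F₁ (φ y) (fderiv 𝕜 φ y v) = L (fderiv 𝕜 F₂ y v) := by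
  have hfun : F₁ ∘ φ = L ∘ F₂ := funext hcomp
  calc fderiv 𝕜 F₁ (φ y) (fderiv 𝕜 φ y v) = fderiv 𝕜 (F₁ ∘ φ) y v := by
        rw [fderiv_comp y hF₁ hφ]; rfl
    _ = L (fderiv 𝕜 F₂ y v) := by rw [hfun, L.comp_fderiv]; rfl

theorem fderiv_clm_apply_const {𝕜 : Type*} [NontriviallyNormedField 𝕜]
    {E F F' : Type*} [NormedAddCommGroup E] [NormedSpace 𝕜 E]
    [NormedAddCommGroup F] [NormedSpace 𝕜 F] [NormedAddCommGroup F'] [NormedSpace 𝕜 F']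
    {Φ : E → F →L[𝕜] F'} {y : E} (hΦ : DifferentiableAt 𝕜 Φ y) (ξ : F) (v : E) :
    fderiv 𝕜 (fun y' => Φ y' ξ) y v = fderiv 𝕜 Φ y v ξ := by
  simp [fderiv_clm_apply hΦ (differentiableAt_const ξ)]

section InvariantSystem

variable {G V W U : Type*} [NormedAddCommGroup V] [NormedSpace ℝ V]
  {A : G → (V ≃L[ℝ] V)} {ρ : G → W → W} {ψ : G → U → U} {γ : W → G} {ℓ β : W → V}

section Group

variable [Group G]

theorem symm_apply_eq_apply_inv (hA_id : ∀ x, A 1 x = x)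
    (hA_comp : ∀ g h x, A (g * h) x = A g (A h x)) (g : G) (x : V) :
    (A g).symm x = A g⁻¹ x := by
  rw [ContinuousLinearEquiv.symm_apply_eq, ← hA_comp, mul_inv_cancel, hA_id]

theorem frame_apply_apply_eq (hA_comp : ∀ g h x, A (g * h) x = A g (A h x))
    (hγ : ∀ g y, γ (ρ g y) * g = γ y) (g : G) (ξ : V) (y : W) :
    A (γ (ρ g y)) (A g ξ) = A (γ y) ξ := by
  rw [eq_mul_inv_of_mul_eq (hγ g y), ← hA_comp, inv_mul_cancel_right]

theorem observer_map_equivariant (hA_id : ∀ x, A 1 x = x)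
    (hA_comp : ∀ g h x, A (g * h) x = A g (A h x))
    (hρ_comp : ∀ g h y, ρ (g * h) y = ρ g (ρ h y)) (hγ : ∀ g y, γ (ρ g y) * g = γ y)
    (hβ : ∀ y, β y = (A (γ y)).symm (ℓ (ρ (γ y) y))) (g : G) (y : W) :
    β (ρ g y) = A g (β y) := by
  simp only [hβ, eq_mul_inv_of_mul_eq (hγ _ _), symm_apply_eq_apply_inv hA_id hA_comp,
    ← hρ_comp, inv_mul_cancel_right, mul_inv_rev, inv_inv, hA_comp]

end Group

variable [NormedAddCommGroup W] [NormedSpace ℝ W]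

theorem map_error_velocity_eq {f : V → W → U → V} {hvf : V → W → U → W} {α : V → W → U → V}
    (f_inv : ∀ g x y u, A g (f x y u) = f (A g x) (ρ g y) (ψ g u))
    (h_inv : ∀ g x y u, fderiv ℝ (ρ g) y (hvf x y u) = hvf (A g x) (ρ g y) (ψ g u))
    (hDβ : ∀ g y v, fderiv ℝ β (ρ g y) (fderiv ℝ (ρ g) y v) = A g (fderiv ℝ β y v))
    (hα : ∀ z y u, α z y u = f (z + β y) y u - fderiv ℝ β y (hvf (z + β y) y u))
    (g : G) (x z : V) (y : W) (u : U) :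
    A g (α z y u + fderiv ℝ β y (hvf x y u) - f x y u)
      = f (A g (z + β y)) (ρ g y) (ψ g u) - f (A g x) (ρ g y) (ψ g u)
        - fderiv ℝ β (ρ g y)
            (hvf (A g (z + β y)) (ρ g y) (ψ g u) - hvf (A g x) (ρ g y) (ψ g u)) := by
  simp only [hα, map_sub, map_add, f_inv, ← hDβ, h_inv]
  abel

variable [Group G]

theorem fderiv_observer_map_equivariant (hA_id : ∀ x, A 1 x = x)
    (hA_comp : ∀ g h x, A (g * h) x = A g (A h x))
    (hρ_comp : ∀ g h y, ρ (g * h) y = ρ g (ρ h y)) (hρ_diff : ∀ g, Differentiable ℝ (ρ g))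
    (hγ : ∀ g y, γ (ρ g y) * g = γ y)
    (hβ : ∀ y, β y = (A (γ y)).symm (ℓ (ρ (γ y) y))) (hβ_diff : Differentiable ℝ β)
    (g : G) (y v : W) :
    fderiv ℝ β (ρ g y) (fderiv ℝ (ρ g) y v) = A g (fderiv ℝ β y v) :=
  fderiv_apply_fderiv_eq_of_comp_eq (A g)
    (observer_map_equivariant hA_id hA_comp hρ_comp hγ hβ g) (hβ_diff _) (hρ_diff g y) v

theorem fderiv_frame_apply_equivariant (hA_comp : ∀ g h x, A (g * h) x = A g (A h x))
    (hρ_diff : ∀ g, Differentiable ℝ (ρ g)) (hγ : ∀ g y, γ (ρ g y) * g = γ y)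
    (hAγ_diff : Differentiable ℝ (fun y : W => (A (γ y) : V →L[ℝ] V)))
    (g : G) (ξ : V) (y v : W) :
    fderiv ℝ (fun y' => A (γ y') (A g ξ)) (ρ g y) (fderiv ℝ (ρ g) y v)
      = fderiv ℝ (fun y' => A (γ y') ξ) y v :=
  fderiv_apply_fderiv_eq_of_comp_eq (ContinuousLinearEquiv.refl ℝ V)
    (frame_apply_apply_eq hA_comp hγ g ξ) ((hAγ_diff _).clm_apply (differentiableAt_const _))
    (hρ_diff g y) v

theorem fderiv_frame_apply_eq_invariant (hA_comp : ∀ g h x, A (g * h) x = A g (A h x))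
    (hρ_diff : ∀ g, Differentiable ℝ (ρ g)) (hγ : ∀ g y, γ (ρ g y) * g = γ y)
    (hAγ_diff : Differentiable ℝ (fun y : W => (A (γ y) : V →L[ℝ] V)))
    {hvf : V → W → U → W}
    (h_inv : ∀ g x y u, fderiv ℝ (ρ g) y (hvf x y u) = hvf (A g x) (ρ g y) (ψ g u))
    (g : G) (x ξ : V) (y : W) (u : U) :
    fderiv ℝ (fun y : W => (A (γ y) : V →L[ℝ] V)) y (hvf x y u) ξ
      = fderiv ℝ (fun y' => A (γ y') (A g ξ)) (ρ g y) (hvf (A g x) (ρ g y) (ψ g u)) := by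
  rw [← h_inv, fderiv_frame_apply_equivariant hA_comp hρ_diff hγ hAγ_diff]
  exact (fderiv_clm_apply_const (hAγ_diff y) ξ _).symm

end InvariantSystem

theorem invariant_error_system_general
    {G : Type*} [Group G]
    {V W : Type*} (U : Type*)
    [NormedAddCommGroup V] [NormedSpace ℝ V]
    [NormedAddCommGroup W] [NormedSpace ℝ W]
    (A : G → (V ≃L[ℝ] V)) (ρ : G → W → W) (ψ : G → U → U)
    (hA_id : ∀ x, A 1 x = x)
    (hA_comp : ∀ g h x, A (g * h) x = A g (A h x))
    (hρ_comp : ∀ g h y, ρ (g * h) y = ρ g (ρ h y))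
    (hρ_diff : ∀ g, ContDiff ℝ 1 (ρ g))
    (γ : W → G)
    (hγ : ∀ g y, γ (ρ g y) * g = γ y)
    (hAγ_smooth : ContDiff ℝ 1 (fun y : W => (A (γ y) : V →L[ℝ] V)))
    (ℓ : W → V)
    (β : W → V)
    (hβ : ∀ y, β y = (A (γ y)).symm (ℓ (ρ (γ y) y)))
    (hβ_smooth : ContDiff ℝ 1 β)
    (f : V → W → U → V) (hvf : V → W → U → W)
    (f_inv : ∀ (g : G) (x : V) (y : W) (u : U),
      A g (f x y u) = f (A g x) (ρ g y) (ψ g u))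
    (h_inv : ∀ (g : G) (x : V) (y : W) (u : U),
      fderiv ℝ (ρ g) y (hvf x y u) = hvf (A g x) (ρ g y) (ψ g u))
    (α : V → W → U → V)
    (hα : ∀ (z : V) (y : W) (u : U),
      α z y u = f (z + β y) y u - fderiv ℝ β y (hvf (z + β y) y u))
    (xc zc : ℝ → V) (yc : ℝ → W) (uc : ℝ → U)
    (hxc : ∀ t, HasDerivAt xc (f (xc t) (yc t) (uc t)) t)
    (hyc : ∀ t, HasDerivAt yc (hvf (xc t) (yc t) (uc t)) t)
    (hzc : ∀ t, HasDerivAt zc (α (zc t) (yc t) (uc t)) t)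
    (Xc : ℝ → V) (hXc : ∀ t, Xc t = A (γ (yc t)) (xc t))
    (Yc : ℝ → W) (hYc : ∀ t, Yc t = ρ (γ (yc t)) (yc t))
    (Uc : ℝ → U) (hUc : ∀ t, Uc t = ψ (γ (yc t)) (uc t))
    (η : ℝ → V)
    (hη : ∀ t, η t = A (γ (yc t)) (zc t) + ℓ (Yc t) - A (γ (yc t)) (xc t)) :
    ∀ t : ℝ,
      HasDerivAt η
        (f (Xc t + η t) (Yc t) (Uc t) - f (Xc t) (Yc t) (Uc t)
          - fderiv ℝ β (Yc t)
              (hvf (Xc t + η t) (Yc t) (Uc t) - hvf (Xc t) (Yc t) (Uc t))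
          + fderiv ℝ (fun y' : W => A (γ y') (η t)) (Yc t)
              (hvf (Xc t) (Yc t) (Uc t))) t := by
  intro t
  have hρ_diff' g := (hρ_diff g).differentiable one_ne_zero
  have hAγ_diff := hAγ_smooth.differentiable one_ne_zero
  have hβ_diff := hβ_smooth.differentiable one_ne_zero
  have hDβ := fderiv_observer_map_equivariant hA_id hA_comp hρ_comp hρ_diff' hγ hβ hβ_diff
  have hη_eq : η = fun s => A (γ (yc s)) (zc s + β (yc s) - xc s) := by
    funext s
    rw [hη, hYc, hβ, map_sub, map_add, ContinuousLinearEquiv.apply_symm_apply]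
  have hηt : η t = A (γ (yc t)) (zc t + β (yc t) - xc t) := congrFun hη_eq t
  have hXη : Xc t + η t = A (γ (yc t)) (zc t + β (yc t)) := by
    rw [hηt, hXc, map_sub]
    abel
  have hderiv : HasDerivAt η
      (fderiv ℝ (fun y : W => (A (γ y) : V →L[ℝ] V)) (yc t) (hvf (xc t) (yc t) (uc t))
          (zc t + β (yc t) - xc t)
        + A (γ (yc t)) (α (zc t) (yc t) (uc t) + fderiv ℝ β (yc t) (hvf (xc t) (yc t) (uc t))
          - f (xc t) (yc t) (uc t))) t := by
    rw [hη_eq]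
    exact ((hAγ_diff _).hasFDerivAt.comp_hasDerivAt t (hyc t)).clm_apply
      (((hzc t).add ((hβ_diff _).hasFDerivAt.comp_hasDerivAt t (hyc t))).sub (hxc t))
  convert hderiv using 1
  rw [map_error_velocity_eq f_inv h_inv hDβ hα,
    fderiv_frame_apply_eq_invariant hA_comp hρ_diff' hγ hAγ_diff h_inv (γ (yc t)),
    ← hηt, ← hXη, ← hXc, ← hYc, ← hUc, map_sub]
  abel

/-- the invariant error system, Theorem 2 of the paper:
along trajectories of the system `ẋ = f(x,y,u)`, `ẏ = h(x,y,u)` and of the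
pre-observer `ż = α(z,y,u)` with
`α(z,y,u) = f(z + β(y), y, u) − Dβ(y)(h(z + β(y), y, u))`, the invariant error
`η = A(γ(y))z + ℓ(Y) − A(γ(y))x` (where `X = A(γ(y))x`, `Y = ρ_{γ(y)}(y)`,
`U = ψ_{γ(y)}(u)`) is differentiable and satisfies
`η̇ = f(X+η,Y,U) − f(X,Y,U) − Dβ(Y)(h(X+η,Y,U) − h(X,Y,U)) + D_y[λ(·;η)](Y)(h(X,Y,U))`,
where `λ(y;ξ) = A(γ(y))ξ`. -/
theorem invariant_error_system
    {G : Type*} [Group G]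
    {V W : Type*} (U : Type*)
    [NormedAddCommGroup V] [NormedSpace ℝ V] [FiniteDimensional ℝ V]
    [NormedAddCommGroup W] [NormedSpace ℝ W] [FiniteDimensional ℝ W]
    (A : G → (V ≃L[ℝ] V)) (ρ : G → W → W) (ψ : G → U → U)
    (hA_id : ∀ x, A 1 x = x)
    (hA_comp : ∀ g h x, A (g * h) x = A g (A h x))
    (hρ_id : ∀ y, ρ 1 y = y)
    (hρ_comp : ∀ g h y, ρ (g * h) y = ρ g (ρ h y))
    (hψ_id : ∀ u, ψ 1 u = u)
    (hψ_comp : ∀ g h u, ψ (g * h) u = ψ g (ψ h u))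
    (hρ_diff : ∀ g, ContDiff ℝ 1 (ρ g))
    (γ : W → G)
    (hγ : ∀ g y, γ (ρ g y) * g = γ y)
    (hAγ_smooth : ContDiff ℝ 1 (fun y : W => (A (γ y) : V →L[ℝ] V)))
    (ℓ : W → V) (hℓ_smooth : ContDiff ℝ 1 ℓ)
    (β : W → V)
    (hβ : ∀ y, β y = (A (γ y)).symm (ℓ (ρ (γ y) y)))
    (hβ_smooth : ContDiff ℝ 1 β)
    (f : V → W → U → V) (hvf : V → W → U → W)
    (f_inv : ∀ (g : G) (x : V) (y : W) (u : U),
      A g (f x y u) = f (A g x) (ρ g y) (ψ g u))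
    (h_inv : ∀ (g : G) (x : V) (y : W) (u : U),
      fderiv ℝ (ρ g) y (hvf x y u) = hvf (A g x) (ρ g y) (ψ g u))
    (α : V → W → U → V)
    (hα : ∀ (z : V) (y : W) (u : U),
      α z y u = f (z + β y) y u - fderiv ℝ β y (hvf (z + β y) y u))
    (xc zc : ℝ → V) (yc : ℝ → W) (uc : ℝ → U)
    (hxc : ∀ t, HasDerivAt xc (f (xc t) (yc t) (uc t)) t)
    (hyc : ∀ t, HasDerivAt yc (hvf (xc t) (yc t) (uc t)) t)
    (hzc : ∀ t, HasDerivAt zc (α (zc t) (yc t) (uc t)) t)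
    (Xc : ℝ → V) (hXc : ∀ t, Xc t = A (γ (yc t)) (xc t))
    (Yc : ℝ → W) (hYc : ∀ t, Yc t = ρ (γ (yc t)) (yc t))
    (Uc : ℝ → U) (hUc : ∀ t, Uc t = ψ (γ (yc t)) (uc t))
    (η : ℝ → V)
    (hη : ∀ t, η t = A (γ (yc t)) (zc t) + ℓ (Yc t) - A (γ (yc t)) (xc t)) :
    ∀ t : ℝ,
      HasDerivAt η
        (f (Xc t + η t) (Yc t) (Uc t) - f (Xc t) (Yc t) (Uc t)
          - fderiv ℝ β (Yc t)
              (hvf (Xc t + η t) (Yc t) (Uc t) - hvf (Xc t) (Yc t) (Uc t))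
          + fderiv ℝ (fun y' : W => A (γ y') (η t)) (Yc t)
              (hvf (Xc t) (Yc t) (Uc t))) t :=
  invariant_error_system_general U A ρ ψ hA_id hA_comp hρ_comp hρ_diff γ hγ hAγ_smooth ℓ β hβ
    hβ_smooth f hvf f_inv h_inv α hα xc zc yc uc hxc hyc hzc Xc hXc Yc hYc Uc hUc η hη
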